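/- Termination of cover construction: over a finite variable set, the iterative process that, while ¬φ ∧ ⋀PI has a model π, picks an unsatisfiable core π_p ⊆ π of φ ∧ π and adds the clause ¬π_p to PI, terminates after finitely many iterations, and upon termination ⋀PI is logically equivalent to φ. -/

import Mathlib

/-
Every added clause `¬t` is an implicate of `φ`, since `t` has no model of `φ`; so `⋀PI` always
follows from `φ`, and once `¬φ ∧ ⋀PI` has no model the two are equivalent. The countermodel `σ`
picked at a step satisfies all of `PI`, but falsifies the new clause because `t ⊆ σ`: the clause
is new, so `PI` grows strictly at every step and, clauses being finitely many, the search for a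
countermodel must fail at some stage.
-/

/-- A literal: a variable paired with a polarity. -/
abbrev Lit (V : Type) := V × Bool
/-- A clause: a finite set of literals, read disjunctively. -/
abbrev Clause (V : Type) := Finset (Lit V)
/-- A term: a finite set of literals, read conjunctively. -/
abbrev PTerm (V : Type) := Finset (Lit V)

/-- An assignment satisfies a clause if it satisfies some literal of it. -/
def clauseSat {V : Type} (σ : V → Bool) (c : Clause V) : Prop := ∃ l ∈ c, σ l.1 = l.2
/-- An assignment satisfies a term if it satisfies every literal of it. -/
def termSat {V : Type} (σ : V → Bool) (t : PTerm V) : Prop := ∀ l ∈ t, σ l.1 = l.2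
/-- A formula (given by its set of models) entails a clause: `c` is an implicate of `φ`. -/
def entailsClause {V : Type} (φ : (V → Bool) → Prop) (c : Clause V) : Prop :=
  ∀ σ, φ σ → clauseSat σ c
/-- A term entails a formula: `t` is an implicant of `φ`. -/
def termEntails {V : Type} (t : PTerm V) (φ : (V → Bool) → Prop) : Prop :=
  ∀ σ, termSat σ t → φ σ
/-- The clause `¬t` obtained by negating every literal of the term `t` (and dually). -/
def negTerm {V : Type} [DecidableEq V] (t : PTerm V) : Clause V :=
  t.image (fun l => (l.1, !l.2))

/-- The total term corresponding to an assignment. -/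
def fullTerm {V : Type} [Fintype V] [DecidableEq V] (σ : V → Bool) : PTerm V :=
  Finset.univ.image (fun v => (v, σ v))

theorem termSat_of_subset_fullTerm {V : Type} [Fintype V] [DecidableEq V] {σ : V → Bool}
    {t : PTerm V} (ht : t ⊆ fullTerm σ) : termSat σ t := by
  intro l hl
  obtain ⟨v, -, rfl⟩ := Finset.mem_image.1 (ht hl)
  rfl

theorem clauseSat_negTerm_iff {V : Type} [DecidableEq V] (σ : V → Bool) (t : PTerm V) :
    clauseSat σ (negTerm t) ↔ ¬ termSat σ t := by
  simp only [clauseSat, negTerm, termSat, Finset.mem_image, not_forall, exists_prop]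
  constructor
  · rintro ⟨-, ⟨l, hl, rfl⟩, hσ⟩
    exact ⟨l, hl, by simp_all⟩
  · rintro ⟨l, hl, hσ⟩
    exact ⟨_, ⟨l, hl, rfl⟩, Bool.eq_not.2 hσ⟩

theorem entailsClause_negTerm {V : Type} [DecidableEq V] {φ : (V → Bool) → Prop} {t : PTerm V}
    (ht : ¬ ∃ τ, φ τ ∧ termSat τ t) : entailsClause φ (negTerm t) :=
  fun τ hτ => (clauseSat_negTerm_iff τ t).2 fun htτ => ht ⟨τ, hτ, htτ⟩

theorem negTerm_notMem_of_forall_clauseSat {V : Type} [Fintype V] [DecidableEq V]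
    {σ : V → Bool} {S : Finset (Clause V)} (hS : ∀ c ∈ S, clauseSat σ c) {t : PTerm V}
    (ht : t ⊆ fullTerm σ) : negTerm t ∉ S := fun hmem =>
  (clauseSat_negTerm_iff σ t).1 (hS _ hmem) (termSat_of_subset_fullTerm ht)

section CoverConstruction

variable {V : Type} [Fintype V] [DecidableEq V] {φ : (V → Bool) → Prop}
  {PI : ℕ → Finset (Clause V)}

theorem forall_entailsClause_of_cover_step (h0 : PI 0 = ∅)
    (hstep : ∀ n, (∃ σ, ¬ φ σ ∧ ∀ c ∈ PI n, clauseSat σ c) →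
      ∃ σ, (¬ φ σ ∧ ∀ c ∈ PI n, clauseSat σ c) ∧
        ∃ t ⊆ fullTerm σ, (¬ ∃ τ, φ τ ∧ termSat τ t) ∧
          PI (n + 1) = insert (negTerm t) (PI n))
    (hstop : ∀ n, (¬ ∃ σ, ¬ φ σ ∧ ∀ c ∈ PI n, clauseSat σ c) → PI (n + 1) = PI n) :
    ∀ n, ∀ c ∈ PI n, entailsClause φ c := by
  intro n
  induction n with
  | zero => simp [h0]
  | succ n ih =>
    by_cases hcm : ∃ σ, ¬ φ σ ∧ ∀ c ∈ PI n, clauseSat σ c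
    · obtain ⟨-, -, t, -, ht, hPI⟩ := hstep n hcm
      rw [hPI]
      exact Finset.forall_mem_insert _ _ _ |>.2 ⟨entailsClause_negTerm ht, ih⟩
    · rwa [hstop n hcm]

theorem exists_no_countermodel_of_cover_step
    (hstep : ∀ n, (∃ σ, ¬ φ σ ∧ ∀ c ∈ PI n, clauseSat σ c) →
      ∃ σ, (¬ φ σ ∧ ∀ c ∈ PI n, clauseSat σ c) ∧
        ∃ t ⊆ fullTerm σ, (¬ ∃ τ, φ τ ∧ termSat τ t) ∧
          PI (n + 1) = insert (negTerm t) (PI n)) :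
    ∃ N, ¬ ∃ σ, ¬ φ σ ∧ ∀ c ∈ PI N, clauseSat σ c := by
  by_contra! hcm
  have hgrow : ∀ n, n ≤ (PI n).card := by
    intro n
    induction n with
    | zero => exact Nat.zero_le _
    | succ n ih =>
      obtain ⟨σ, ⟨-, hσ⟩, t, ht, -, hPI⟩ := hstep n (hcm n)
      rw [hPI, Finset.card_insert_of_notMem (negTerm_notMem_of_forall_clauseSat hσ ht)]
      omega
  have := hgrow (Fintype.card (Clause V) + 1)
  have := Finset.card_le_univ (PI (Fintype.card (Clause V) + 1))
  omega

end CoverConstruction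

theorem forall_iff_forall_clauseSat {V : Type} {φ : (V → Bool) → Prop} {S : Finset (Clause V)}
    (hS : ∀ c ∈ S, entailsClause φ c) (hcm : ¬ ∃ σ, ¬ φ σ ∧ ∀ c ∈ S, clauseSat σ c) :
    ∀ σ, φ σ ↔ ∀ c ∈ S, clauseSat σ c := fun σ =>
  ⟨fun hσ c hc => hS c hc σ hσ, fun hσ => by_contra fun hnσ => hcm ⟨σ, hnσ, hσ⟩⟩

theorem cover_construction_terminates {V : Type} [Fintype V] [DecidableEq V]
    (φ : (V → Bool) → Prop) (PI : ℕ → Finset (Clause V))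
    (h0 : PI 0 = ∅)
    (hstep : ∀ n, (∃ σ, ¬ φ σ ∧ ∀ c ∈ PI n, clauseSat σ c) →
      ∃ σ, (¬ φ σ ∧ ∀ c ∈ PI n, clauseSat σ c) ∧
        ∃ t ⊆ fullTerm σ, (¬ ∃ τ, φ τ ∧ termSat τ t) ∧
          PI (n + 1) = insert (negTerm t) (PI n))
    (hstop : ∀ n, (¬ ∃ σ, ¬ φ σ ∧ ∀ c ∈ PI n, clauseSat σ c) → PI (n + 1) = PI n) :
    ∃ N, (¬ ∃ σ, ¬ φ σ ∧ ∀ c ∈ PI N, clauseSat σ c) ∧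
      (∀ σ, φ σ ↔ ∀ c ∈ PI N, clauseSat σ c) := by
  obtain ⟨N, hN⟩ := exists_no_countermodel_of_cover_step hstep
  have himplicates := forall_entailsClause_of_cover_step h0 hstep hstop
  exact ⟨N, hN, forall_iff_forall_clauseSat (himplicates N) hN⟩
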